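/- Let w ∈ ℂ \ ℝ and let S(z) = Σ_{n∈ℕ} S_{w,n}(z) s_n be a convergent complex spherical series on a Cassini ball around w with positive radius. Define E_{2m} := (1/m!)(2i·Im w)^m S⁽ᵐ⁾(w) and E_{2m+1} := (1/m!)(−2i·Im w)^m S⁽ᵐ⁾(conj(w)). Then the vector ((2i·Im w)ⁿ sₙ)_{n∈ℕ} is the unique solution of the infinite lower-triangular linear system e · x = E, where e is the spherical matrix. In particular, the coefficients sₙ are uniquely determined by the derivatives of S at w and at conj(w). -/

import Mathlib

/-!
Put `c = w - conj w = 2i·Im w`. Then `S_{w,n}(z) = (z-w)^⌈n/2⌉ (z-w+c)^⌊n/2⌋`, and symmetrically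
`S_{w,n}(z) = (z-conj w)^⌊n/2⌋ (z-conj w-c)^⌈n/2⌉`. Convergence of the series at one point of a
small disc around `w` bounds its terms on a smaller disc by `B·2^{-⌊n/2⌋}`, so by Weierstrass the
series may be differentiated termwise, and `S⁽ᵐ⁾(w)/m!` is `Σₙ sₙ·[Xᵐ] X^⌈n/2⌉ (X+c)^⌊n/2⌋`;
likewise at `conj w`. Multiplied by `cᵐ` resp. `(-c)ᵐ`, these binomial coefficients are exactly
`e_{2m,ℓ} c^ℓ` resp. `e_{2m+1,ℓ} c^ℓ`. Uniqueness holds because `e` is lower triangular with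
diagonal `(-1)ⁿ`.
-/

/-- The characteristic polynomial `Δ_w(z) = (z-w)(z-conj w)`. -/
noncomputable def Delta (w z : ℂ) : ℂ := (z - w) * (z - (starRingEnd ℂ) w)

/-- The complex spherical polynomials: `S_{w,2m}(z) = Δ_w(z)^m`,
`S_{w,2m+1}(z) = Δ_w(z)^m (z−w)`. -/
noncomputable def Sph (w : ℂ) (n : ℕ) (z : ℂ) : ℂ :=
  Delta w z ^ (n / 2) * (if n % 2 = 1 then z - w else 1)

/-- The spherical matrix: `e_{2m,2k} = e_{2m+1,2k} = C(k, m−k)`,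
`e_{2m,2k+1} = C(k, m−k−1)`, `e_{2m+1,2k+1} = −C(k+1, m−k)`, with the
convention that `C(a,b) = 0` if `b < 0` or `b > a`. -/
def sphE (n l : ℕ) : ℤ :=
  let m := n / 2
  let k := l / 2
  if n % 2 = 0 then
    if l % 2 = 0 then (if k ≤ m then (Nat.choose k (m - k) : ℤ) else 0)
    else (if k + 1 ≤ m then (Nat.choose k (m - k - 1) : ℤ) else 0)
  else
    if l % 2 = 0 then (if k ≤ m then (Nat.choose k (m - k) : ℤ) else 0)
    else (if k ≤ m then -(Nat.choose (k + 1) (m - k) : ℤ) else 0)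

open Filter Topology Metric Polynomial
open scoped Nat

section Weierstrass

variable {E ι : Type*} [NormedAddCommGroup E] [NormedSpace ℂ E] [CompleteSpace E] {U : Set ℂ}

theorem DifferentiableOn.iteratedDeriv {f : ℂ → E} (hf : DifferentiableOn ℂ f U) (hU : IsOpen U)
    (m : ℕ) : DifferentiableOn ℂ (iteratedDeriv m f) U := by
  induction m with
  | zero => simpa using hf
  | succ m ih => simpa only [iteratedDeriv_succ] using ih.deriv hU

theorem TendstoLocallyUniformlyOn.iteratedDeriv {l : Filter ι} {F : ι → ℂ → E} {f : ℂ → E}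
    (hf : TendstoLocallyUniformlyOn F f l U) (hF : ∀ᶠ i in l, DifferentiableOn ℂ (F i) U)
    (hU : IsOpen U) (m : ℕ) :
    TendstoLocallyUniformlyOn (fun i => iteratedDeriv m (F i)) (iteratedDeriv m f) l U := by
  induction m with
  | zero => simpa using hf
  | succ m ih =>
    simpa only [iteratedDeriv_succ, Function.comp_def] using
      ih.deriv (hF.mono fun i hi => hi.iteratedDeriv hU m) hU

theorem hasSum_iteratedDeriv_of_summable_norm {F : ι → ℂ → E} {g : ℂ → E} {u : ι → ℝ}
    (hu : Summable u) (hF : ∀ i, DifferentiableOn ℂ (F i) U) (hU : IsOpen U)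
    (hF_le : ∀ i, ∀ z ∈ U, ‖F i z‖ ≤ u i) (hg : ∀ z ∈ U, HasSum (fun i => F i z) (g z))
    {z : ℂ} (hz : z ∈ U) (m : ℕ) :
    HasSum (fun i => iteratedDeriv m (F i) z) (iteratedDeriv m g z) := by
  have hlim : TendstoLocallyUniformlyOn (fun s : Finset ι => fun z => ∑ i ∈ s, F i z) g atTop U :=
    (tendstoUniformlyOn_tsum hu hF_le).tendstoLocallyUniformlyOn.congr_right
      fun z hz => (hg z hz).tsum_eq
  have hderiv :=
    (hlim.iteratedDeriv (.of_forall fun s => .fun_sum fun i _ => hF i) hU m).tendsto_at hz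
  refine hderiv.congr fun s => iteratedDeriv_fun_sum fun i _ => ?_
  exact ((hF i).contDiffOn hU).contDiffAt (hU.mem_nhds hz)

end Weierstrass

theorem Polynomial.iteratedDeriv_eval (p : ℂ[X]) (m : ℕ) :
    iteratedDeriv m (fun z => p.eval z) = fun z => (derivative^[m] p).eval z := by
  induction m generalizing p with
  | zero => rfl
  | succ m ih =>
    have hderiv : _root_.deriv (fun z => p.eval z) = fun z => (derivative p).eval z :=
      _root_.funext fun _ => p.deriv
    rw [iteratedDeriv_succ', hderiv, ih, Function.iterate_succ_apply]

theorem Polynomial.iteratedDeriv_eval_sub_self (p : ℂ[X]) (x : ℂ) (m : ℕ) :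
    iteratedDeriv m (fun z => p.eval (z - x)) x = m ! * p.coeff m := by
  rw [congrFun (iteratedDeriv_comp_sub_const m (fun z => p.eval z) x) x, sub_self,
    p.iteratedDeriv_eval]
  simp only [← coeff_zero_eq_eval_zero, coeff_iterate_derivative, zero_add, Nat.descFactorial_self,
    nsmul_eq_mul]

theorem Polynomial.coeff_X_pow_mul_X_add_C_pow {R : Type*} [CommSemiring R] (r : R) (a b m : ℕ) :
    (X ^ a * (X + C r) ^ b).coeff m =
      if a ≤ m then (b.choose (m - a) : R) * r ^ (b - (m - a)) else 0 := by
  rw [coeff_X_pow_mul', coeff_X_add_C_pow, mul_comm]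

theorem hasSum_coeff_of_hasSum_eval_sub {ι : Type*} {p : ι → ℂ[X]} {f : ℂ → ℂ} {x : ℂ}
    {U : Set ℂ} (hU : IsOpen U) (hx : x ∈ U) {M : ι → ℝ} (hM : Summable M)
    (hp_le : ∀ i, ∀ z ∈ U, ‖(p i).eval (z - x)‖ ≤ M i)
    (hf : ∀ z ∈ U, HasSum (fun i => (p i).eval (z - x)) (f z)) (m : ℕ) :
    HasSum (fun i => (p i).coeff m) (iteratedDeriv m f x / m !) := by
  have h := hasSum_iteratedDeriv_of_summable_norm (F := fun i z => (p i).eval (z - x)) hM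
    (fun i => ((p i).differentiable.comp (differentiable_id.sub_const x)).differentiableOn)
    hU hp_le hf hx m
  simp only [Polynomial.iteratedDeriv_eval_sub_self] at h
  simpa [mul_div_cancel_left₀, m.factorial_ne_zero] using h.div_const (m ! : ℂ)

theorem summable_pow_of_half_le {ρ : ℝ} (h0 : 0 ≤ ρ) (h1 : ρ < 1) {a : ℕ → ℕ}
    (ha : ∀ n, n / 2 ≤ a n) : Summable fun n => ρ ^ a n := by
  have hhalf : Summable fun n => ρ ^ (n / 2) := by
    refine Summable.even_add_odd ?_ ?_ <;>
      simpa [Nat.mul_div_cancel_left, Nat.mul_add_div] using summable_geometric_of_lt_one h0 h1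
  exact hhalf.of_nonneg_of_le (fun n => pow_nonneg h0 _)
    fun n => pow_le_pow_of_le_one h0 h1.le (ha n)

theorem exists_bound_pow_mul_pow_mul {x y : ℂ} {a b : ℕ → ℕ} {u : ℕ → ℂ} {ε : ℝ} (hε : 0 < ε)
    (h : ∀ z ∈ ball x ε, Summable fun n => (z - x) ^ a n * (z - y) ^ b n * u n) :
    ∃ B : ℝ, ∀ n, ∀ z ∈ ball x (ε / 4),
      ‖(z - x) ^ a n * (z - y) ^ b n * u n‖ ≤ (1 / 2) ^ a n * B := by
  -- `z₀` lies on the ray from `y` through `x`, so that `‖z₀ - y‖ ≥ ‖z - y‖` on the smaller ball.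
  set e : ℂ := Complex.exp (Complex.arg (x - y) * Complex.I)
  have he : ‖e‖ = 1 := Complex.norm_exp_ofReal_mul_I _
  set z₀ : ℂ := x + (ε / 2 : ℝ) * e
  have hz₀x : ‖z₀ - x‖ = ε / 2 := by simp [z₀, he, abs_of_pos hε]
  have hz₀y : ‖z₀ - y‖ = ε / 2 + ‖x - y‖ := by
    have : z₀ - y = ((ε / 2 + ‖x - y‖ : ℝ) : ℂ) * e := by
      rw [Complex.ofReal_add, add_mul, Complex.norm_mul_exp_arg_mul_I]; ring
    rw [this, norm_mul, he, mul_one, Complex.norm_real, Real.norm_of_nonneg (by positivity)]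
  have hz₀ : z₀ ∈ ball x ε := by rw [mem_ball, dist_eq_norm, hz₀x]; linarith
  obtain ⟨B, hB⟩ := (h z₀ hz₀).tendsto_atTop_zero.norm.bddAbove_range
  refine ⟨B, fun n z hz => ?_⟩
  rw [mem_ball, dist_eq_norm] at hz
  have hzx : ‖z - x‖ ≤ 1 / 2 * ‖z₀ - x‖ := by rw [hz₀x]; linarith
  have hzy : ‖z - y‖ ≤ ‖z₀ - y‖ := by
    rw [hz₀y]; linarith [norm_sub_le_norm_sub_add_norm_sub z x y]
  calc ‖(z - x) ^ a n * (z - y) ^ b n * u n‖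
      ≤ (1 / 2 * ‖z₀ - x‖) ^ a n * ‖z₀ - y‖ ^ b n * ‖u n‖ := by
        simp only [norm_mul, norm_pow]; gcongr
    _ = (1 / 2) ^ a n * ‖(z₀ - x) ^ a n * (z₀ - y) ^ b n * u n‖ := by
        simp only [norm_mul, norm_pow, mul_pow]; ring
    _ ≤ (1 / 2) ^ a n * B := by gcongr; exact hB ⟨n, rfl⟩

theorem hasSum_coeff_of_eventually_hasSum_pow_mul_pow {f : ℂ → ℂ} {x y : ℂ} {a b : ℕ → ℕ}
    {u : ℕ → ℂ} (ha : ∀ n, n / 2 ≤ a n)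
    (h : ∀ᶠ z in 𝓝 x, HasSum (fun n => (z - x) ^ a n * (z - y) ^ b n * u n) (f z)) (m : ℕ) :
    HasSum (fun n => (X ^ a n * (X + C (x - y)) ^ b n).coeff m * u n)
      (iteratedDeriv m f x / m !) := by
  obtain ⟨ε, hε, hball⟩ := eventually_nhds_iff_ball.mp h
  obtain ⟨B, hB⟩ := exists_bound_pow_mul_pow_mul hε fun z hz => (hball z hz).summable
  have heval (n : ℕ) (z : ℂ) : (X ^ a n * (X + C (x - y)) ^ b n * C (u n)).eval (z - x) =
      (z - x) ^ a n * (z - y) ^ b n * u n := by simp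
  have h := hasSum_coeff_of_hasSum_eval_sub isOpen_ball (mem_ball_self (by positivity))
    ((summable_pow_of_half_le (by norm_num) (by norm_num) ha).mul_right B)
    (fun n z hz => (heval n z).symm ▸ hB n z hz)
    (fun z hz => by simpa only [heval] using hball z (ball_subset_ball (by linarith) hz)) m
  simpa only [coeff_mul_C] using h

theorem pow_mul_coeff_X_pow_mul_X_add_C_pow {R : Type*} [CommSemiring R] (r : R) (a b m : ℕ) :
    r ^ m * (X ^ a * (X + C r) ^ b).coeff m =
      (if a ≤ m then (b.choose (m - a) : R) else 0) * r ^ (a + b) := by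
  rw [coeff_X_pow_mul_X_add_C_pow]
  split_ifs with ham
  · by_cases hb : m - a ≤ b
    · rw [show a + b = m + (b - (m - a)) by omega, pow_add]; ring
    · simp [Nat.choose_eq_zero_of_lt (not_le.mp hb)]
  · simp

theorem sphE_two_mul (m l : ℕ) :
    sphE (2 * m) l = if l - l / 2 ≤ m then ((l / 2).choose (m - (l - l / 2)) : ℤ) else 0 := by
  rcases Nat.even_or_odd' l with ⟨k, rfl | rfl⟩
  · simp [sphE, show 2 * k - k = k by omega]
  · simp [sphE, Nat.mul_add_div, show 2 * k + 1 - k = k + 1 by omega, Nat.sub_sub]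

theorem sphE_two_mul_add_one (m l : ℕ) :
    sphE (2 * m + 1) l =
      (-1) ^ l * if l / 2 ≤ m then ((l - l / 2).choose (m - l / 2) : ℤ) else 0 := by
  rcases Nat.even_or_odd' l with ⟨k, rfl | rfl⟩
  · simp [sphE, Nat.mul_add_div, show 2 * k - k = k by omega]
  · simp [sphE, Nat.mul_add_div, show 2 * k + 1 - k = k + 1 by omega, pow_succ]

theorem sphE_eq_zero_of_lt {n l : ℕ} (h : n < l) : sphE n l = 0 := by
  rcases Nat.even_or_odd' n with ⟨m, rfl | rfl⟩
  · rw [sphE_two_mul, if_neg (by omega)]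
  · rw [sphE_two_mul_add_one, if_neg (by omega), mul_zero]

theorem sphE_self (n : ℕ) : sphE n n = (-1) ^ n := by
  rcases Nat.even_or_odd' n with ⟨m, rfl | rfl⟩
  · rw [sphE_two_mul, if_pos (by omega)]
    simp [show 2 * m - m = m by omega, pow_mul]
  · rw [sphE_two_mul_add_one, if_pos (by omega)]
    simp [Nat.mul_add_div, show 2 * m + 1 - m = m + 1 by omega]

theorem sphE_two_mul_mul_pow {R : Type*} [CommRing R] (r : R) (m l : ℕ) :
    (sphE (2 * m) l : R) * r ^ l = r ^ m * (X ^ (l - l / 2) * (X + C r) ^ (l / 2)).coeff m := by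
  rw [pow_mul_coeff_X_pow_mul_X_add_C_pow, sphE_two_mul, show l - l / 2 + l / 2 = l by omega]
  split_ifs <;> simp

theorem sphE_two_mul_add_one_mul_pow {R : Type*} [CommRing R] (r : R) (m l : ℕ) :
    (sphE (2 * m + 1) l : R) * r ^ l =
      (-r) ^ m * (X ^ (l / 2) * (X + C (-r)) ^ (l - l / 2)).coeff m := by
  rw [pow_mul_coeff_X_pow_mul_X_add_C_pow, sphE_two_mul_add_one,
    show l / 2 + (l - l / 2) = l by omega, neg_pow r l]
  split_ifs <;> push_cast <;> ring

theorem eq_of_sum_range_succ_mul_eq {R : Type*} [Ring R] [NoZeroDivisors R] {A : ℕ → ℕ → R}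
    (hA : ∀ n, A n n ≠ 0) {x y : ℕ → R}
    (h : ∀ n, ∑ l ∈ Finset.range (n + 1), A n l * x l = ∑ l ∈ Finset.range (n + 1), A n l * y l) :
    x = y := by
  funext n
  induction n using Nat.strong_induction_on with
  | _ n ih =>
    have hlow : ∑ l ∈ Finset.range n, A n l * x l = ∑ l ∈ Finset.range n, A n l * y l :=
      Finset.sum_congr rfl fun l hl => by rw [ih l (Finset.mem_range.mp hl)]
    have hn := h n
    rw [Finset.sum_range_succ, Finset.sum_range_succ, hlow, add_right_inj] at hn
    exact mul_left_cancel₀ (hA n) hn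

theorem Sph_eq_pow_mul_pow (w : ℂ) (n : ℕ) (z : ℂ) :
    Sph w n z = (z - w) ^ (n - n / 2) * (z - starRingEnd ℂ w) ^ (n / 2) := by
  rcases Nat.even_or_odd' n with ⟨k, rfl | rfl⟩
  · simp [Sph, Delta, show 2 * k - k = k by omega, mul_pow]
  · simp [Sph, Delta, Nat.mul_add_div, show 2 * k + 1 - k = k + 1 by omega, mul_pow]; ring

theorem hasSum_sphE_two_mul_mul {w : ℂ} {s : ℕ → ℂ} {SF : ℂ → ℂ}
    (h : ∀ᶠ z in 𝓝 w, HasSum (fun n => Sph w n z * s n) (SF z)) (m : ℕ) :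
    HasSum (fun l => (sphE (2 * m) l : ℂ) * ((w - starRingEnd ℂ w) ^ l * s l))
      (1 / (m ! : ℂ) * (w - starRingEnd ℂ w) ^ m * iteratedDeriv m SF w) := by
  have hcoeff := hasSum_coeff_of_eventually_hasSum_pow_mul_pow (a := fun n => n - n / 2)
    (by omega) (h.mono fun z hz => by simpa only [Sph_eq_pow_mul_pow] using hz) m
  rw [mul_assoc, one_div_mul_eq_div, mul_div_assoc]
  simpa only [← mul_assoc, ← sphE_two_mul_mul_pow] using
    hcoeff.mul_left ((w - starRingEnd ℂ w) ^ m)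

theorem hasSum_sphE_two_mul_add_one_mul {w : ℂ} {s : ℕ → ℂ} {SF : ℂ → ℂ}
    (h : ∀ᶠ z in 𝓝 (starRingEnd ℂ w), HasSum (fun n => Sph w n z * s n) (SF z)) (m : ℕ) :
    HasSum (fun l => (sphE (2 * m + 1) l : ℂ) * ((w - starRingEnd ℂ w) ^ l * s l))
      (1 / (m ! : ℂ) * (-(w - starRingEnd ℂ w)) ^ m * iteratedDeriv m SF (starRingEnd ℂ w)) := by
  have hcoeff := hasSum_coeff_of_eventually_hasSum_pow_mul_pow (y := w) (a := fun n => n / 2)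
    (fun _ => le_rfl) (h.mono fun z hz => by
      simpa only [Sph_eq_pow_mul_pow, mul_comm ((z - w) ^ _)] using hz) m
  rw [← neg_sub w] at hcoeff
  rw [mul_assoc, one_div_mul_eq_div, mul_div_assoc]
  simpa only [← mul_assoc, ← sphE_two_mul_add_one_mul_pow] using
    hcoeff.mul_left ((-(w - starRingEnd ℂ w)) ^ m)

theorem spherical_series_coefficients_general (w : ℂ) (R : ℝ) (hR : 0 < R)
    (s : ℕ → ℂ) (SF : ℂ → ℂ)
    (hconv : ∀ z : ℂ, ‖Delta w z‖ < R ^ 2 →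
      HasSum (fun n => Sph w n z * s n) (SF z))
    (E : ℕ → ℂ)
    (hE : ∀ m : ℕ,
      E (2 * m) = (1 / (Nat.factorial m : ℂ)) * (2 * Complex.I * (w.im : ℂ)) ^ m
          * iteratedDeriv m SF w ∧
      E (2 * m + 1) = (1 / (Nat.factorial m : ℂ)) * (-(2 * Complex.I * (w.im : ℂ))) ^ m
          * iteratedDeriv m SF ((starRingEnd ℂ) w)) :
    (∀ n : ℕ, ∑ l ∈ Finset.range (n + 1),
        (sphE n l : ℂ) * ((2 * Complex.I * (w.im : ℂ)) ^ l * s l) = E n) ∧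
    (∀ x : ℕ → ℂ,
      (∀ n : ℕ, ∑ l ∈ Finset.range (n + 1), (sphE n l : ℂ) * x l = E n) →
      x = fun n => (2 * Complex.I * (w.im : ℂ)) ^ n * s n) := by
  have hc : 2 * Complex.I * (w.im : ℂ) = w - starRingEnd ℂ w := by
    rw [Complex.sub_conj]; push_cast; ring
  rw [hc] at hE ⊢
  have hopen : IsOpen {z : ℂ | ‖Delta w z‖ < R ^ 2} :=
    isOpen_lt (by unfold Delta; fun_prop) continuous_const
  have hnear (z₀ : ℂ) (hz₀ : Delta w z₀ = 0) :
      ∀ᶠ z in 𝓝 z₀, HasSum (fun n => Sph w n z * s n) (SF z) :=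
    eventually_of_mem (hopen.mem_nhds (by simp [hz₀, hR])) hconv
  have hsolution (n : ℕ) : ∑ l ∈ Finset.range (n + 1),
      (sphE n l : ℂ) * ((w - starRingEnd ℂ w) ^ l * s l) = E n := by
    refine (hasSum_sum_of_ne_finset_zero (L := .unconditional ℕ) fun l hl => ?_).unique ?_
    · rw [sphE_eq_zero_of_lt (by simpa using hl), Int.cast_zero, zero_mul]
    · obtain ⟨m, rfl | rfl⟩ := Nat.even_or_odd' n
      · exact (hE m).1 ▸ hasSum_sphE_two_mul_mul (hnear w (by simp [Delta])) m
      · exact (hE m).2 ▸ hasSum_sphE_two_mul_add_one_mul (hnear _ (by simp [Delta])) m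
  refine ⟨hsolution, fun x hx => eq_of_sum_range_succ_mul_eq (fun n => ?_) fun n =>
    (hx n).trans (hsolution n).symm⟩
  simp [sphE_self]

/-- If `w ∉ ℝ` and the spherical series `Σₙ S_{w,n}(z)·sₙ` converges on a
Cassini ball of positive radius around `w` to a holomorphic function `SF`,
define `E_{2m} := (1/m!)(2i·Im w)^m·SF⁽ᵐ⁾(w)` and
`E_{2m+1} := (1/m!)(−2i·Im w)^m·SF⁽ᵐ⁾(conj w)`.  Then
`(（2i·Im w)ⁿ·sₙ)ₙ` is the unique solution of the infinite lower-triangular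
system `e·x = E` (the `n`-th equation being `Σ_{ℓ≤n} e_{n,ℓ} x_ℓ = E_n`). -/
theorem spherical_series_coefficients (w : ℂ) (hw : w.im ≠ 0) (R : ℝ) (hR : 0 < R)
    (s : ℕ → ℂ) (SF : ℂ → ℂ)
    (hconv : ∀ z : ℂ, ‖Delta w z‖ < R ^ 2 →
      HasSum (fun n => Sph w n z * s n) (SF z))
    (hdiff : DifferentiableOn ℂ SF {z : ℂ | ‖Delta w z‖ < R ^ 2})
    (E : ℕ → ℂ)
    (hE : ∀ m : ℕ,
      E (2 * m) = (1 / (Nat.factorial m : ℂ)) * (2 * Complex.I * (w.im : ℂ)) ^ m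
          * iteratedDeriv m SF w ∧
      E (2 * m + 1) = (1 / (Nat.factorial m : ℂ)) * (-(2 * Complex.I * (w.im : ℂ))) ^ m
          * iteratedDeriv m SF ((starRingEnd ℂ) w)) :
    (∀ n : ℕ, ∑ l ∈ Finset.range (n + 1),
        (sphE n l : ℂ) * ((2 * Complex.I * (w.im : ℂ)) ^ l * s l) = E n) ∧
    (∀ x : ℕ → ℂ,
      (∀ n : ℕ, ∑ l ∈ Finset.range (n + 1), (sphE n l : ℂ) * x l = E n) →
      x = fun n => (2 * Complex.I * (w.im : ℂ)) ^ n * s n) :=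
  spherical_series_coefficients_general w R hR s SF hconv E hE
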